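/- Let m ≥ 3. The complete sun KS_m (obtained from the complete graph K_m on vertices u₁, …, u_m by adding new vertices v₁, …, v_m with each u_i adjacent to v_{i−1} and v_i, indices taken modulo m) satisfies η(KS_m) = ⌈(m + 2)/3⌉. -/

import Mathlib

open Classical in
/-- Sum of the labels `f` over the open neighborhood of `v` in `G`. -/
noncomputable def nbrSum {V : Type*} [Fintype V] (G : SimpleGraph V) (f : V → ℕ) (v : V) : ℕ :=
  ∑ w ∈ Finset.univ.filter (fun w => G.Adj v w), f w

open Classical in
/-- The degree of `v` in `G`. -/
noncomputable def deg {V : Type*} [Fintype V] (G : SimpleGraph V) (v : V) : ℕ :=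
  (Finset.univ.filter (fun w => G.Adj v w)).card

/-- `f : V → {1,…,k}` is an additive `k`-coloring of `G`: labels lie in `{1,…,k}` and
adjacent vertices get distinct open-neighborhood sums. -/
def IsAdditiveColoring {V : Type*} [Fintype V] (G : SimpleGraph V) (k : ℕ) (f : V → ℕ) : Prop :=
  (∀ v, 1 ≤ f v ∧ f v ≤ k) ∧ ∀ u v, G.Adj u v → nbrSum G f u ≠ nbrSum G f v

/-- The additive chromatic number `η(G)`: the least `k` admitting an additive `k`-coloring. -/
noncomputable def eta {V : Type*} [Fintype V] (G : SimpleGraph V) : ℕ :=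
  sInf {k | ∃ f : V → ℕ, IsAdditiveColoring G k f}

/-- The complete sun `KS_m`: `Sum.inl i` is `uᵢ`, `Sum.inr i` is `vᵢ`;
the `uᵢ` form a complete graph `K_m`, and `uᵢ` is adjacent to `vᵢ` and `v_{i-1}`
(indices mod `m`). -/
def completeSun (m : ℕ) : SimpleGraph (Fin m ⊕ Fin m) where
  Adj x y :=
    match x, y with
    | Sum.inl i, Sum.inl j => i ≠ j
    | Sum.inl i, Sum.inr j => j = i ∨ (j.val + 1) % m = i.val
    | Sum.inr j, Sum.inl i => j = i ∨ (j.val + 1) % m = i.val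
    | Sum.inr _, Sum.inr _ => False
  symm := by
    constructor
    rintro (i | i) (j | j) h
    · exact fun e => h e.symm
    · exact h
    · exact h
    · exact h.elim
  loopless := by
    constructor
    rintro (i | i) h
    · exact h rfl
    · exact h

/-!
The `uᵢ` form a clique and `Σ_{N(uᵢ)} f = Σⱼ f(uⱼ) + ψᵢ` with
`ψᵢ = f(vᵢ) + f(vᵢ₋₁) - f(uᵢ) ∈ [2 - k, 2k - 1]`, so an additive `k`-coloring makes `i ↦ ψᵢ`
injective into a set of `3k - 2` integers and `m ≤ 3k - 2`. Conversely, for `k = ⌈(m + 2)/3⌉`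
the labels `sunLabelU`, `sunLabelV` below make `ψ` injective and give the `uᵢ` a label total of
at least `3k - 1`, so every `uᵢ`-sum exceeds `2k`, an upper bound for every `vⱼ`-sum.
-/

open Finset Function

lemma Fintype.sum_ite_eq_or {α M : Type*} [Fintype α] [DecidableEq α] [AddCommMonoid M]
    {a b : α} (hab : a ≠ b) (g : α → M) :
    ∑ x, (if x = a ∨ x = b then g x else 0) = g a + g b := by
  rw [← sum_filter, show univ.filter (fun x => x = a ∨ x = b) = {a, b} by ext; simp,
    sum_pair hab]

lemma Fin.val_sub_one_eq_ite {m : ℕ} [NeZero m] (i : Fin m) :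
    ((i - 1 : Fin m) : ℕ) = if (i : ℕ) = 0 then m - 1 else i - 1 := by
  split_ifs with h
  · obtain ⟨n, rfl⟩ : ∃ n, m = n + 1 := ⟨m - 1, by have := NeZero.ne m; omega⟩
    rw [show i = 0 from Fin.ext h, zero_sub, Fin.coe_neg_one]
    rfl
  · exact Fin.val_sub_one_of_ne_zero (Fin.val_ne_zero_iff.1 h)

lemma Fin.sub_one_ne_self {m : ℕ} [NeZero m] (hm : 2 ≤ m) (i : Fin m) : i - 1 ≠ i := by
  rw [Ne, sub_eq_self, Fin.ext_iff, Fin.val_one', Fin.val_zero, Nat.one_mod_eq_one.2 (by omega)]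
  omega

lemma nbrSum_eq_sum_ite {V : Type*} [Fintype V] (G : SimpleGraph V) [DecidableRel G.Adj]
    (f : V → ℕ) (v : V) : nbrSum G f v = ∑ w, if G.Adj v w then f w else 0 := by
  rw [nbrSum, sum_filter]
  congr!

lemma eta_eq_of_isAdditiveColoring_of_le {V : Type*} [Fintype V] {G : SimpleGraph V} {k : ℕ}
    {f : V → ℕ} (hf : IsAdditiveColoring G k f)
    (hle : ∀ k' f', IsAdditiveColoring G k' f' → k ≤ k') : eta G = k :=
  le_antisymm (Nat.sInf_le ⟨f, hf⟩) (le_csInf ⟨k, f, hf⟩ fun _ ⟨f', hf'⟩ => hle _ f' hf')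

section CompleteSun

variable {m : ℕ}

@[simp] lemma completeSun_adj_inl_inl {i j : Fin m} :
    (completeSun m).Adj (.inl i) (.inl j) ↔ i ≠ j := Iff.rfl

@[simp] lemma completeSun_not_adj_inr_inr (i j : Fin m) :
    ¬(completeSun m).Adj (.inr i) (.inr j) := id

variable [NeZero m]

lemma completeSun_adj_inl_inr {i j : Fin m} :
    (completeSun m).Adj (.inl i) (.inr j) ↔ j = i ∨ j = i - 1 := by
  show j = i ∨ (j.val + 1) % m = i.val ↔ _
  rw [eq_sub_iff_add_eq, Fin.ext_iff (a := j + 1), Fin.val_add, Fin.val_one', Nat.add_mod_mod]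

lemma completeSun_adj_inr_inl {i j : Fin m} :
    (completeSun m).Adj (.inr j) (.inl i) ↔ i = j ∨ i = j + 1 := by
  rw [(completeSun m).adj_comm, completeSun_adj_inl_inr, eq_sub_iff_add_eq, eq_comm (a := j + 1)]
  exact or_congr eq_comm Iff.rfl

lemma nbrSum_completeSun_inr (hm : 2 ≤ m) (f : Fin m ⊕ Fin m → ℕ) (j : Fin m) :
    nbrSum (completeSun m) f (.inr j) = f (.inl j) + f (.inl (j + 1)) := by
  classical
  have hj : j ≠ j + 1 := by simpa [eq_sub_iff_add_eq] using (Fin.sub_one_ne_self hm (j + 1)).symm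
  rw [nbrSum_eq_sum_ite, Fintype.sum_sum_type]
  simp [completeSun_adj_inr_inl, Fintype.sum_ite_eq_or hj]

lemma nbrSum_completeSun_inl (hm : 2 ≤ m) (f : Fin m ⊕ Fin m → ℕ) (i : Fin m) :
    nbrSum (completeSun m) f (.inl i) + f (.inl i) =
      ∑ j, f (.inl j) + (f (.inr i) + f (.inr (i - 1))) := by
  classical
  rw [nbrSum_eq_sum_ite, Fintype.sum_sum_type]
  simp only [completeSun_adj_inl_inl, completeSun_adj_inl_inr,
    Fintype.sum_ite_eq_or (Fin.sub_one_ne_self hm i).symm]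
  rw [← sum_filter, filter_ne, add_right_comm, sum_erase_add _ _ (mem_univ i)]

def sunExcess (f : Fin m ⊕ Fin m → ℕ) (i : Fin m) : ℤ :=
  f (.inr i) + f (.inr (i - 1)) - f (.inl i)

lemma nbrSum_completeSun_inl_eq (hm : 2 ≤ m) (f : Fin m ⊕ Fin m → ℕ) (i : Fin m) :
    (nbrSum (completeSun m) f (.inl i) : ℤ) = ∑ j, (f (.inl j) : ℤ) + sunExcess f i := by
  have h := congr_arg (Nat.cast : ℕ → ℤ) (nbrSum_completeSun_inl hm f i)
  push_cast at h
  rw [sunExcess]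
  linarith

lemma nbrSum_completeSun_inl_inj (hm : 2 ≤ m) {f : Fin m ⊕ Fin m → ℕ} {i j : Fin m} :
    nbrSum (completeSun m) f (.inl i) = nbrSum (completeSun m) f (.inl j) ↔
      sunExcess f i = sunExcess f j := by
  rw [← Nat.cast_inj (R := ℤ), nbrSum_completeSun_inl_eq hm, nbrSum_completeSun_inl_eq hm,
    add_right_inj]

lemma sunExcess_mem_Icc {k : ℕ} {f : Fin m ⊕ Fin m → ℕ} (hf : ∀ v, 1 ≤ f v ∧ f v ≤ k)
    (i : Fin m) : sunExcess f i ∈ Icc (2 - k : ℤ) (2 * k - 1) := by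
  have := hf (.inl i); have := hf (.inr i); have := hf (.inr (i - 1))
  rw [mem_Icc, sunExcess]
  omega

lemma add_two_le_three_mul_of_isAdditiveColoring (hm : 2 ≤ m) {k : ℕ}
    {f : Fin m ⊕ Fin m → ℕ} (hf : IsAdditiveColoring (completeSun m) k f) : m + 2 ≤ 3 * k := by
  have hinj : Injective (sunExcess f) := fun i j h =>
    by_contra fun hij => hf.2 (.inl i) (.inl j) hij ((nbrSum_completeSun_inl_inj hm).2 h)
  have := card_le_card_of_injOn (s := univ) (sunExcess f) (fun i _ => sunExcess_mem_Icc hf.1 i)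
    hinj.injOn
  rw [card_univ, Fintype.card_fin, Int.card_Icc] at this
  omega

end CompleteSun

section Construction

variable {m k : ℕ}

-- `sunLabelV` makes `f(vᵢ) + f(vᵢ₋₁) = i + 1` until the `v`-labels saturate at `k`;
-- `sunLabelU` then shifts `ψᵢ` by `-k` for `i < k`, by `1 - k` up to the saturation point, and
-- decreases past it so that `ψᵢ = i + 2 - k` persists.
def sunLabelU (k i : ℕ) : ℕ := if i < k then k else if i < 2 * k - 1 then k - 1 else 3 * k - 2 - i

def sunLabelV (k i : ℕ) : ℕ := min (i / 2 + 1) k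

def sunColoring (k : ℕ) : Fin m ⊕ Fin m → ℕ :=
  Sum.elim (fun i => sunLabelU k i) (fun i => sunLabelV k i)

lemma sunLabelU_mem {i : ℕ} (hi : i + 3 ≤ 3 * k) : 1 ≤ sunLabelU k i ∧ sunLabelU k i ≤ k := by
  unfold sunLabelU
  split_ifs <;> omega

lemma sunLabelV_mem (hk : 1 ≤ k) (i : ℕ) : 1 ≤ sunLabelV k i ∧ sunLabelV k i ≤ k := by
  unfold sunLabelV
  omega

lemma sunColoring_mem (hmk : m + 2 ≤ 3 * k) :
    ∀ v : Fin m ⊕ Fin m, 1 ≤ sunColoring k v ∧ sunColoring k v ≤ k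
  | .inl i => sunLabelU_mem (by have := i.isLt; omega)
  | .inr i => sunLabelV_mem (by omega) i

lemma sum_sunLabelU_ge (hm : 2 ≤ m) (hk : 2 ≤ k) (hmk : m + 2 ≤ 3 * k) :
    2 * k + m ≤ ∑ i : Fin m, sunLabelU k i + 2 := by
  obtain ⟨n, rfl⟩ : ∃ n, m = n + 2 := ⟨m - 2, by omega⟩
  rw [Fin.sum_univ_eq_sum_range (sunLabelU k), sum_range_succ', sum_range_succ']
  have hrest : n ≤ ∑ i ∈ range n, sunLabelU k (i + 1 + 1) := by
    simpa using card_nsmul_le_sum (range n) (fun i => sunLabelU k (i + 1 + 1)) 1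
      fun i hi => (sunLabelU_mem (by rw [mem_range] at hi; omega)).1
  have h0 : sunLabelU k 0 = k := if_pos (by omega)
  have h1 : sunLabelU k (0 + 1) = k := if_pos (by omega)
  omega

variable [NeZero m]

lemma sunExcess_sunColoring (hm : 3 ≤ m) (hmk : m + 2 ≤ 3 * k) (hkm : 3 * k ≤ m + 4)
    (i : Fin m) : sunExcess (sunColoring k) i =
      if (i : ℕ) = 0 then 1
      else if (i : ℕ) < k then ((i : ℕ) : ℤ) + 1 - k
      else ((i : ℕ) : ℤ) + 2 - k := by
  have := i.isLt
  simp only [sunExcess, sunColoring, Sum.elim_inl, Sum.elim_inr, Fin.val_sub_one_eq_ite,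
    sunLabelU, sunLabelV]
  split_ifs <;> omega

lemma sunExcess_sunColoring_injective (hm : 3 ≤ m) (hmk : m + 2 ≤ 3 * k) (hkm : 3 * k ≤ m + 4) :
    Injective (sunExcess (sunColoring (m := m) k)) := by
  intro i j h
  rw [sunExcess_sunColoring hm hmk hkm, sunExcess_sunColoring hm hmk hkm] at h
  ext
  split_ifs at h <;> omega

lemma nbrSum_inr_lt_nbrSum_inl (hm : 3 ≤ m) (hmk : m + 2 ≤ 3 * k) (hkm : 3 * k ≤ m + 4)
    (i j : Fin m) :
    nbrSum (completeSun m) (sunColoring k) (.inr j) <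
      nbrSum (completeSun m) (sunColoring k) (.inl i) := by
  have hv := nbrSum_completeSun_inr (by omega) (sunColoring k) j
  have hu := nbrSum_completeSun_inl_eq (by omega) (sunColoring k) i
  have hT : ((2 * k + m : ℕ) : ℤ) ≤ ∑ l : Fin m, (sunColoring k (.inl l) : ℤ) + 2 := by
    exact_mod_cast sum_sunLabelU_ge (by omega) (by omega) hmk
  have hψ := (mem_Icc.1 (sunExcess_mem_Icc (sunColoring_mem hmk) i)).1
  have := (sunColoring_mem hmk (.inl j)).2
  have := (sunColoring_mem hmk (.inl (j + 1))).2
  omega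

lemma isAdditiveColoring_sunColoring (hm : 3 ≤ m) (hmk : m + 2 ≤ 3 * k) (hkm : 3 * k ≤ m + 4) :
    IsAdditiveColoring (completeSun m) k (sunColoring k) := by
  refine ⟨sunColoring_mem hmk, ?_⟩
  rintro (i | i) (j | j) hadj
  · exact (nbrSum_completeSun_inl_inj (by omega)).not.2
      ((sunExcess_sunColoring_injective hm hmk hkm).ne hadj)
  · exact (nbrSum_inr_lt_nbrSum_inl hm hmk hkm i j).ne'
  · exact (nbrSum_inr_lt_nbrSum_inl hm hmk hkm j i).ne
  · exact absurd hadj (completeSun_not_adj_inr_inr i j)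

end Construction

/-- For `m ≥ 3`, the complete sun `KS_m` satisfies `η(KS_m) = ⌈(m + 2)/3⌉`. -/
theorem eta_completeSun (m : ℕ) (hm : 3 ≤ m) :
    eta (completeSun m) = (m + 2) ⌈/⌉ 3 := by
  have : NeZero m := ⟨by omega⟩
  rw [Nat.ceilDiv_eq_add_pred_div, show (m + 2 + 3 - 1) / 3 = (m + 4) / 3 by omega]
  refine eta_eq_of_isAdditiveColoring_of_le
    (isAdditiveColoring_sunColoring hm (by omega) (by omega)) fun k f hf => ?_
  have := add_two_le_three_mul_of_isAdditiveColoring (by omega) hf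
  omega
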